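/- Let G be a 2-vertex-connected outerplanar graph with outer cycle 1,…,n, let f be a bounded face of G, and let i,j ∈ [n] with i ≠ j+1 be such that both [i,j] and its complement [j+1,i−1] contain a vertex of f. Let f1, f2 be the bounded faces containing edges {i−1,i} and {j,j+1}. Then δ_G([i,j]) equals the union of the edges of the weak-dual paths from f1 to f and from f to f2, together with the edges {i−1,i} and {j,j+1}; in particular, f lies on the weak-dual path from f1 to f2. -/

import Mathlib

open scoped Classical

/-- `x` lies strictly between `a` and `b` in the clockwise cyclic order of `Fin n`. -/
def btw {n : ℕ} (a x b : Fin n) : Prop :=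
  (a < x ∧ x < b) ∨ (b < a ∧ (a < x ∨ x < b))

/-- `z` is a chord of the `n`-gon: it joins two distinct, non-consecutive vertices. -/
def IsChordal (n : ℕ) [NeZero n] (z : Sym2 (Fin n)) : Prop :=
  ∃ a b : Fin n, z = s(a, b) ∧ a ≠ b ∧ b ≠ a + 1 ∧ a ≠ b + 1

/-- Two chords cross: their endpoints strictly interleave around the cycle. -/
def ChordCross {n : ℕ} (z w : Sym2 (Fin n)) : Prop :=
  ∃ a b c d : Fin n, z = s(a, b) ∧ w = s(c, d) ∧ _root_.btw a c b ∧ _root_.btw b d a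

/-- A 2-vertex-connected outerplanar graph, encoded by its fixed outerplanar embedding:
the outer (Hamiltonian) cycle `0,1,…,n-1` together with a set of pairwise noncrossing
chords. -/
structure OPGraph (n : ℕ) [NeZero n] where
  chords : Finset (Sym2 (Fin n))
  isChord : ∀ z ∈ chords, IsChordal n z
  noncross : ∀ z ∈ chords, ∀ w ∈ chords, ¬ ChordCross z w

/-- The edges of the outerplanar graph: the outer cycle edges together with the chords. -/
def OPGraph.edge {n : ℕ} [NeZero n] (Gp : OPGraph n) (z : Sym2 (Fin n)) : Prop :=
  (∃ a : Fin n, z = s(a, a + 1)) ∨ z ∈ Gp.chords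

/-- `v` is the clockwise successor of `u` among the vertices of `F`. -/
def succIn {n : ℕ} (F : Finset (Fin n)) (u v : Fin n) : Prop :=
  u ∈ F ∧ v ∈ F ∧ u ≠ v ∧ ∀ w ∈ F, ¬ _root_.btw u w v

/-- `z` is an edge of the boundary cycle of the vertex set `F`. -/
def BoundaryEdge {n : ℕ} (F : Finset (Fin n)) (z : Sym2 (Fin n)) : Prop :=
  ∃ u v : Fin n, z = s(u, v) ∧ succIn F u v

/-- `F` is the vertex set of a bounded face of the outerplanar graph `Gp`:
its cyclically consecutive pairs are edges of `Gp`, and `Gp` has no edge joining two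
non-consecutive vertices of `F`. -/
def OPGraph.IsFace {n : ℕ} [NeZero n] (Gp : OPGraph n) (F : Finset (Fin n)) : Prop :=
  3 ≤ F.card ∧
  (∀ u v : Fin n, succIn F u v → Gp.edge s(u, v)) ∧
  (∀ u ∈ F, ∀ v ∈ F, u ≠ v → Gp.edge s(u, v) → succIn F u v ∨ succIn F v u)

/-- The bounded faces of `Gp`. -/
def OPGraph.Face {n : ℕ} [NeZero n] (Gp : OPGraph n) := {F : Finset (Fin n) // Gp.IsFace F}

/-- The weak dual of `Gp`: vertices are the bounded faces, two faces being adjacent when they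
share a chord of `Gp`. -/
def OPGraph.weakDual {n : ℕ} [NeZero n] (Gp : OPGraph n) : SimpleGraph Gp.Face :=
  SimpleGraph.fromRel
    (fun F F' => ∃ z ∈ Gp.chords, BoundaryEdge F.1 z ∧ BoundaryEdge F'.1 z)

/-- The interval `[i,j]` of vertices going clockwise from `i` to `j` (wrapping around). -/
def interval {n : ℕ} (i j : Fin n) : Set (Fin n) := {k | (k - i).val ≤ (j - i).val}

/-- The cut `δ_G(S)`: all edges of `Gp` with exactly one endpoint in `S`. -/
def OPGraph.cut {n : ℕ} [NeZero n] (Gp : OPGraph n) (S : Set (Fin n)) : Set (Sym2 (Fin n)) :=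
  {z | Gp.edge z ∧ ∃ u v : Fin n, z = s(u, v) ∧ u ∈ S ∧ v ∉ S}

/-- The chords of `Gp` corresponding to the edges of a walk `p` in the weak dual. -/
def pathChords {n : ℕ} [NeZero n] (Gp : OPGraph n) {F1 F2 : Gp.Face}
    (p : Gp.weakDual.Walk F1 F2) : Set (Sym2 (Fin n)) :=
  {z | z ∈ Gp.chords ∧ ∃ F F' : Gp.Face,
    s(F, F') ∈ p.edges ∧ BoundaryEdge F.1 z ∧ BoundaryEdge F'.1 z}

/-!
Every bounded face lies on one side of every chord `s(a, b)`: inside the closed arc `[a, b]`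
or inside `[b, a]`. Moreover a face is determined by any of its directed boundary edges, so each
chord bounds exactly two faces, which lie on opposite sides of it. Hence walking along a dual
edge changes the side of a chord `z` exactly when that dual edge is `z`, and a dual trail crosses
`z` if and only if its two ends lie on different sides of `z`.

A chord leaving `[i, j]` separates `F1`, which contains `i - 1` and `i`, from `F2`, which
contains `j` and `j + 1`, so it is crossed by `p1` or by `p2`. A chord with both ends in
`[i, j]`, or both outside, has one of its arcs inside `[i, j]` or inside the complement, so all
faces meeting both `[i, j]` and its complement lie on the same side of it, and neither `p1` nor
`p2` crosses it. Finally, the boundary of `f` has an edge leaving `[i, j]`: either it is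
`{j, j + 1}` and `f = F2`, or it is a chord which every path from `F1` to `F2` crosses, entering
or leaving `f`.
-/

open Fin.CommRing

section CyclicOrder

variable {n : ℕ}

lemma val_sub_eq_ite (x y : Fin n) :
    (x - y).val = if y.val ≤ x.val then x.val - y.val else n + x.val - y.val := by
  split_ifs with h
  · exact Fin.coe_sub_iff_le.2 (Fin.le_def.2 h)
  · exact Fin.coe_sub_iff_lt.2 (Fin.lt_def.2 (by omega))

lemma btw_iff_val {a x b : Fin n} :
    _root_.btw a x b ↔ 0 < (x - a).val ∧ (x - a).val < (b - a).val := by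
  have := a.isLt; have := x.isLt; have := b.isLt
  simp only [_root_.btw, Fin.lt_def, val_sub_eq_ite]
  split_ifs <;> omega

lemma mem_interval {a b w : Fin n} : w ∈ interval a b ↔ (w - a).val ≤ (b - a).val := Iff.rfl

lemma right_mem_interval (a b : Fin n) : b ∈ interval a b := mem_interval.2 le_rfl

lemma mem_interval_of_btw {a b w : Fin n} (h : _root_.btw a w b) : w ∈ interval a b :=
  (btw_iff_val.1 h).2.le

variable [NeZero n]

/-- `(w - a).val` is the clockwise distance from `a` to `w`; every statement about the cyclic
order is reduced to linear arithmetic on distances from one common base point. -/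
lemma val_sub_rebase (a u w : Fin n) :
    (w - u).val = if (u - a).val ≤ (w - a).val then (w - a).val - (u - a).val
      else n + (w - a).val - (u - a).val := by
  rw [show w - u = (w - a) - (u - a) by ring, val_sub_eq_ite]

lemma eq_of_val_sub_eq {a w w' : Fin n} (h : (w - a).val = (w' - a).val) : w = w' :=
  sub_left_injective (Fin.ext h)

lemma val_sub_eq_zero_iff {x y : Fin n} : (x - y).val = 0 ↔ x = y := by
  rw [Fin.val_eq_zero_iff, sub_eq_zero]

lemma val_add_one_sub (u a : Fin n) :
    (u + 1 - a).val = if (u - a).val + 1 < n then (u - a).val + 1 else 0 := by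
  have := (u - a).isLt
  rw [show u + 1 - a = (u - a) + 1 by ring, Fin.val_add, Fin.val_one']
  rcases Nat.lt_or_ge 1 n with hn | hn
  · rw [Nat.mod_eq_of_lt hn]
    split_ifs with h
    · exact Nat.mod_eq_of_lt h
    · rw [show (u - a).val + 1 = n by omega, Nat.mod_self]
  · obtain rfl : n = 1 := by have := NeZero.pos n; omega
    simp

lemma val_sub_one_sub_self (i : Fin n) : (i - 1 - i).val = n - 1 := by
  obtain ⟨m, rfl⟩ : ∃ m, n = m + 1 := ⟨n - 1, by have := NeZero.pos n; omega⟩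
  rw [show i - 1 - i = -1 by ring, Fin.coe_neg_one, Nat.add_sub_cancel]

lemma left_mem_interval (a b : Fin n) : a ∈ interval a b := by
  simp [mem_interval]

lemma eq_or_eq_or_btw_of_mem_interval {a b w : Fin n} (h : w ∈ interval a b) :
    w = a ∨ w = b ∨ _root_.btw a w b := by
  rw [mem_interval] at h
  rcases Nat.eq_zero_or_pos (w - a).val with h0 | h0
  · exact .inl (val_sub_eq_zero_iff.1 h0)
  · rcases h.eq_or_lt with h1 | h1
    · exact .inr (.inl (eq_of_val_sub_eq h1))
    · exact .inr (.inr (btw_iff_val.2 ⟨h0, h1⟩))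

lemma eq_or_eq_of_mem_interval_of_mem_interval {a b w : Fin n} (h₁ : w ∈ interval a b)
    (h₂ : w ∈ interval b a) : w = a ∨ w = b := by
  have := (w - a).isLt; have := (b - a).isLt
  rw [mem_interval] at h₁ h₂
  rw [val_sub_rebase a b w, val_sub_rebase a b a, sub_self, Fin.val_zero] at h₂
  rcases Nat.eq_zero_or_pos (w - a).val with h | h
  · exact .inl (val_sub_eq_zero_iff.1 h)
  · refine .inr (eq_of_val_sub_eq (a := a) ?_)
    split_ifs at h₂ <;> omega

lemma eq_or_eq_add_one_of_mem_interval {u w : Fin n} (h : w ∈ interval u (u + 1)) :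
    w = u ∨ w = u + 1 := by
  rw [mem_interval, add_sub_cancel_left, Fin.val_one'] at h
  have := Nat.mod_le 1 n
  rcases Nat.lt_or_ge (w - u).val (1 % n) with h' | h'
  · exact .inl (val_sub_eq_zero_iff.1 (by omega))
  · refine .inr (sub_eq_iff_eq_add'.1 (Fin.ext ?_))
    rw [Fin.val_one']
    omega

lemma not_btw_add_one (u x : Fin n) : ¬ _root_.btw u x (u + 1) := by
  rw [btw_iff_val, add_sub_cancel_left, Fin.val_one']
  have := Nat.mod_le 1 n
  omega

lemma not_mem_interval_iff_btw {a b w : Fin n} (hab : a ≠ b) :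
    w ∉ interval a b ↔ _root_.btw b w a := by
  have := (w - a).isLt; have := (b - a).isLt
  have : (b - a).val ≠ 0 := fun h => hab (val_sub_eq_zero_iff.1 h).symm
  rw [mem_interval, btw_iff_val, val_sub_rebase a b w, val_sub_rebase a b a, sub_self,
    Fin.val_zero]
  split_ifs <;> omega

lemma add_one_mem_interval_of_btw {a b u : Fin n} (h : _root_.btw a u b) :
    u + 1 ∈ interval a b := by
  rw [btw_iff_val] at h
  rw [mem_interval, val_add_one_sub]
  split_ifs <;> omega

lemma btw_of_btw_of_btw {a b y v : Fin n} (hy : _root_.btw a y b) (hv : _root_.btw b v a) :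
    _root_.btw a y v := by
  have := (v - a).isLt
  rw [btw_iff_val] at hy hv ⊢
  rw [val_sub_rebase a b v, val_sub_rebase a b a, sub_self, Fin.val_zero] at hv
  split_ifs at hv <;> omega

lemma interval_subset_of_le {a b c d : Fin n} (hb : b ∈ interval c d)
    (hab : (a - c).val ≤ (b - c).val) : interval a b ⊆ interval c d := by
  intro w hw
  rw [mem_interval] at hb hw ⊢
  rw [val_sub_rebase c a w, val_sub_rebase c a b] at hw
  have := (w - c).isLt
  split_ifs at hw <;> omega

lemma interval_subset_or_interval_subset {a b c d : Fin n} (ha : a ∈ interval c d)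
    (hb : b ∈ interval c d) :
    interval a b ⊆ interval c d ∨ interval b a ⊆ interval c d := by
  rcases le_total (a - c).val (b - c).val with h | h
  · exact .inl (interval_subset_of_le hb h)
  · exact .inr (interval_subset_of_le ha h)

lemma compl_interval {i j : Fin n} (hij : i ≠ j + 1) :
    (interval i j)ᶜ = interval (j + 1) (i - 1) := by
  ext w
  have := (w - i).isLt; have := (j - i).isLt
  have hj : (j + 1 - i).val = (j - i).val + 1 := by
    rw [val_add_one_sub, if_pos]
    by_contra h
    refine hij (eq_of_val_sub_eq (a := i) ?_).symm
    rw [val_add_one_sub, if_neg h, sub_self, Fin.val_zero]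
  rw [Set.mem_compl_iff, mem_interval, mem_interval, val_sub_rebase i (j + 1) w,
    val_sub_rebase i (j + 1) (i - 1), hj, val_sub_one_sub_self]
  split_ifs <;> omega

lemma sub_one_not_mem_interval {i j : Fin n} (hij : i ≠ j + 1) : i - 1 ∉ interval i j := by
  rw [← Set.mem_compl_iff, compl_interval hij]
  exact right_mem_interval _ _

lemma add_one_not_mem_interval {i j : Fin n} (hij : i ≠ j + 1) : j + 1 ∉ interval i j := by
  rw [← Set.mem_compl_iff, compl_interval hij]
  exact left_mem_interval _ _

lemma btw_or_btw_add_one_of_mem_of_not_mem {i j u v : Fin n} (hu : u ∈ interval i j)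
    (hv : v ∉ interval i j) (huv : u ≠ j ∨ v ≠ j + 1) :
    _root_.btw u j v ∨ _root_.btw u (j + 1) v := by
  have := (v - i).isLt
  rw [mem_interval] at hu hv
  have hj : (j + 1 - i).val = (j - i).val + 1 := by
    rw [val_add_one_sub, if_pos (by omega)]
  rcases Nat.lt_or_ge (u - i).val (j - i).val with h | h
  · left
    rw [btw_iff_val, val_sub_rebase i u j, val_sub_rebase i u v]
    split_ifs <;> omega
  · have huj : u = j := eq_of_val_sub_eq (a := i) (by omega)
    have hvj : (v - i).val ≠ (j + 1 - i).val := fun h =>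
      huv.elim (· huj) (· (eq_of_val_sub_eq h))
    right
    rw [btw_iff_val, val_sub_rebase i u (j + 1), val_sub_rebase i u v, hj]
    rw [hj] at hvj
    split_ifs <;> omega

lemma eq_of_mem_interval_of_add_one_not_mem {i j u : Fin n} (hu : u ∈ interval i j)
    (hu' : u + 1 ∉ interval i j) : u = j := by
  by_contra h
  rcases btw_or_btw_add_one_of_mem_of_not_mem hu hu' (.inl h) with h' | h' <;>
    exact not_btw_add_one _ _ h'

end CyclicOrder

section Successor

variable {n : ℕ} [NeZero n] {F : Finset (Fin n)}

lemma succIn.subset_interval {u v : Fin n} (h : succIn F u v) :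
    (F : Set (Fin n)) ⊆ interval v u := fun w hw => by
  by_contra hw'
  exact h.2.2.2 w hw ((not_mem_interval_iff_btw h.2.2.1.symm).1 hw')

lemma exists_succIn {u w : Fin n} (hu : u ∈ F) (hw : w ∈ F)
    (hwu : w ≠ u) : ∃ v, succIn F u v := by
  obtain ⟨v, hv, hmin⟩ := Finset.exists_min_image (F.erase u) (fun x => (x - u).val)
    ⟨w, Finset.mem_erase.2 ⟨hwu, hw⟩⟩
  obtain ⟨hvu, hvF⟩ := Finset.mem_erase.1 hv
  refine ⟨v, hu, hvF, hvu.symm, fun x hx hxuv => ?_⟩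
  rw [btw_iff_val] at hxuv
  have hxu : x ≠ u := fun h => by simp [h] at hxuv
  have := hmin x (Finset.mem_erase.2 ⟨hxu, hx⟩)
  omega

lemma exists_succIn_btw {a b x : Fin n} (ha : a ∈ F) (hb : b ∈ F)
    (hab : a ≠ b) (hx : x ∉ F) : ∃ u v, succIn F u v ∧ _root_.btw u x v := by
  obtain ⟨u, hu, hmin⟩ := Finset.exists_min_image F (fun w => (x - w).val) ⟨a, ha⟩
  obtain ⟨w, hw, hwu⟩ : ∃ w ∈ F, w ≠ u := by
    by_cases hau : a = u
    · exact ⟨b, hb, hau ▸ hab.symm⟩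
    · exact ⟨a, ha, hau⟩
  obtain ⟨v, hv⟩ := exists_succIn hu hw hwu
  refine ⟨u, v, hv, btw_iff_val.2 ⟨?_, ?_⟩⟩
  · exact Nat.pos_of_ne_zero fun h => hx (val_sub_eq_zero_iff.1 h ▸ hu)
  · have hvu : (v - u).val ≠ 0 := fun h => hv.2.2.1 (val_sub_eq_zero_iff.1 h).symm
    have := hmin v hv.2.1
    rw [val_sub_rebase u v x] at this
    split_ifs at this <;> omega

lemma exists_succIn_mem_not_mem {i j x y : Fin n} (hx : x ∈ F)
    (hxS : x ∈ interval i j) (hy : y ∈ F) (hyS : y ∉ interval i j) :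
    ∃ u v, succIn F u v ∧ u ∈ interval i j ∧ v ∉ interval i j := by
  obtain ⟨u, hu, hmax⟩ := Finset.exists_max_image {w ∈ F | w ∈ interval i j}
    (fun w => (w - i).val) ⟨x, Finset.mem_filter.2 ⟨hx, hxS⟩⟩
  obtain ⟨huF, huS⟩ := Finset.mem_filter.1 hu
  obtain ⟨v, hv⟩ := exists_succIn huF hy fun h => hyS (h ▸ huS)
  refine ⟨u, v, hv, huS, fun hvS => hv.2.2.2 y hy ?_⟩
  have hvu := hmax v (Finset.mem_filter.2 ⟨hv.2.1, hvS⟩)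
  have hvu' : (v - i).val ≠ (u - i).val := fun h => hv.2.2.1 (eq_of_val_sub_eq h).symm
  have := (y - i).isLt
  rw [mem_interval] at huS hyS
  rw [btw_iff_val, val_sub_rebase i u y, val_sub_rebase i u v]
  split_ifs <;> omega

end Successor

section BoundaryEdge

variable {n : ℕ} {F : Finset (Fin n)} {a b : Fin n}

lemma BoundaryEdge.mk_iff : BoundaryEdge F s(a, b) ↔ succIn F a b ∨ succIn F b a := by
  constructor
  · rintro ⟨u, v, huv, h⟩
    rcases Sym2.eq_iff.1 huv with ⟨rfl, rfl⟩ | ⟨rfl, rfl⟩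
    exacts [.inl h, .inr h]
  · rintro (h | h)
    exacts [⟨a, b, rfl, h⟩, ⟨b, a, Sym2.eq_swap, h⟩]

lemma BoundaryEdge.mem_mk (h : BoundaryEdge F s(a, b)) : a ∈ F ∧ b ∈ F ∧ a ≠ b := by
  rcases BoundaryEdge.mk_iff.1 h with h | h
  exacts [⟨h.1, h.2.1, h.2.2.1⟩, ⟨h.2.1, h.1, h.2.2.1.symm⟩]

end BoundaryEdge

namespace OPGraph

variable {n : ℕ} [NeZero n] {Gp : OPGraph n}

lemma chordal_of_mem_chords {a b : Fin n} (h : s(a, b) ∈ Gp.chords) :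
    a ≠ b ∧ b ≠ a + 1 ∧ a ≠ b + 1 := by
  obtain ⟨c, d, hcd, h⟩ := Gp.isChord _ h
  rcases Sym2.eq_iff.1 hcd with ⟨rfl, rfl⟩ | ⟨rfl, rfl⟩
  · exact h
  · exact ⟨h.1.symm, h.2.2, h.2.1⟩

lemma not_edge_of_btw_of_btw {a b u v : Fin n} (hz : s(a, b) ∈ Gp.chords)
    (hu : _root_.btw a u b) (hv : _root_.btw b v a) : ¬ Gp.edge s(u, v) := by
  have hab := (Gp.chordal_of_mem_chords hz).1
  rintro (⟨c, hc⟩ | huv)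
  · rcases Sym2.eq_iff.1 hc with ⟨rfl, rfl⟩ | ⟨rfl, rfl⟩
    · exact (not_mem_interval_iff_btw hab).2 hv (add_one_mem_interval_of_btw hu)
    · exact (not_mem_interval_iff_btw hab.symm).2 hu (add_one_mem_interval_of_btw hv)
  · exact Gp.noncross _ hz _ huv ⟨a, b, u, v, rfl, rfl, hu, hv⟩

lemma mk_mem_cut_iff {S : Set (Fin n)} {a b : Fin n} :
    s(a, b) ∈ Gp.cut S ↔ Gp.edge s(a, b) ∧ ¬ (a ∈ S ↔ b ∈ S) := by
  refine and_congr_right fun _ => ⟨?_, fun h => ?_⟩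
  · rintro ⟨u, v, huv, hu, hv⟩
    rcases Sym2.eq_iff.1 huv with ⟨rfl, rfl⟩ | ⟨rfl, rfl⟩ <;> tauto
  · by_cases ha : a ∈ S
    exacts [⟨a, b, rfl, ha, fun hb => h (iff_of_true ha hb)⟩,
      ⟨b, a, Sym2.eq_swap, by tauto, ha⟩]

lemma weakDual_adj {A C : Gp.Face} :
    Gp.weakDual.Adj A C ↔
      A ≠ C ∧ ∃ z ∈ Gp.chords, BoundaryEdge A.1 z ∧ BoundaryEdge C.1 z := by
  rw [weakDual, SimpleGraph.fromRel_adj]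
  refine and_congr_right fun _ => or_iff_left_of_imp ?_
  rintro ⟨z, hz, hC, hA⟩
  exact ⟨z, hz, hA, hC⟩

namespace IsFace

variable {F : Finset (Fin n)}

lemma not_subset_pair (hF : Gp.IsFace F) (a b : Fin n) : ¬ F ⊆ {a, b} := fun h => by
  have := (Finset.card_le_card h).trans (Finset.card_le_two (a := a) (b := b))
  have := hF.1
  omega

lemma not_subset_interval_and (hF : Gp.IsFace F) (a b : Fin n) :
    ¬ ((F : Set (Fin n)) ⊆ interval a b ∧ (F : Set (Fin n)) ⊆ interval b a) :=
  fun ⟨h₁, h₂⟩ => hF.not_subset_pair a b fun w hw => by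
    simpa using eq_or_eq_of_mem_interval_of_mem_interval (h₁ hw) (h₂ hw)

lemma not_succIn_and_succIn (hF : Gp.IsFace F) (a b : Fin n) :
    ¬ (succIn F a b ∧ succIn F b a) :=
  fun ⟨h₁, h₂⟩ =>
    hF.not_subset_interval_and a b ⟨h₂.subset_interval, h₁.subset_interval⟩

lemma not_succIn_add_one (hF : Gp.IsFace F) (v : Fin n) : ¬ succIn F (v + 1) v :=
  fun h => hF.not_subset_pair v (v + 1) fun w hw => by
    simpa using eq_or_eq_add_one_of_mem_interval (h.subset_interval hw)

/-- The boundary edge of `F` leaving the arc `[a, b]` cannot start strictly inside it (it would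
cross the chord) nor at `a` (it would jump over `y`), so it starts at `b`. -/
lemma mem_of_btw_of_btw (hF : Gp.IsFace F) {a b x y : Fin n} (hz : s(a, b) ∈ Gp.chords)
    (hx : x ∈ F) (hxba : _root_.btw b x a) (hy : y ∈ F) (hyab : _root_.btw a y b) :
    b ∈ F := by
  have hab := (Gp.chordal_of_mem_chords hz).1
  obtain ⟨u, v, huv, hu, hv⟩ := exists_succIn_mem_not_mem hy (mem_interval_of_btw hyab) hx
    ((not_mem_interval_iff_btw hab).2 hxba)
  rw [not_mem_interval_iff_btw hab] at hv
  rcases eq_or_eq_or_btw_of_mem_interval hu with rfl | rfl | hu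
  · exact absurd (btw_of_btw_of_btw hyab hv) (huv.2.2.2 y hy)
  · exact huv.1
  · exact absurd (hF.2.1 u v huv) (Gp.not_edge_of_btw_of_btw hz hu hv)

lemma subset_interval_or (hF : Gp.IsFace F) {a b : Fin n} (hz : s(a, b) ∈ Gp.chords) :
    (F : Set (Fin n)) ⊆ interval a b ∨ (F : Set (Fin n)) ⊆ interval b a := by
  have hab := (Gp.chordal_of_mem_chords hz).1
  by_contra! h
  obtain ⟨⟨x, hx, hxab⟩, ⟨y, hy, hyba⟩⟩ := And.imp Set.not_subset.1 Set.not_subset.1 h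
  rw [not_mem_interval_iff_btw hab] at hxab
  rw [not_mem_interval_iff_btw hab.symm] at hyba
  have hb := hF.mem_of_btw_of_btw hz hx hxab hy hyba
  have ha := hF.mem_of_btw_of_btw (Sym2.eq_swap ▸ hz) hy hyba hx hxab
  rcases hF.2.2 a ha b hb hab (.inr hz) with h | h
  · exact (not_mem_interval_iff_btw hab.symm).2 hyba (h.subset_interval hy)
  · exact (not_mem_interval_iff_btw hab).2 hxab (h.subset_interval hx)

lemma subset_interval_of_btw (hF : Gp.IsFace F) {a b w : Fin n} (hz : s(a, b) ∈ Gp.chords)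
    (hw : w ∈ F) (h : _root_.btw a w b) : (F : Set (Fin n)) ⊆ interval a b :=
  (hF.subset_interval_or hz).resolve_right fun hba =>
    (not_mem_interval_iff_btw (Gp.chordal_of_mem_chords hz).1.symm).2 h (hba hw)

/-- A vertex of `F` outside `F'` lies strictly inside a boundary edge `(u, v)` of `F'`, which
must be a chord; then `F ⊆ [u, v]` and `F' ⊆ [v, u]`, forcing `{a, b} = {u, v}`. -/
lemma subset_of_succIn (hF : Gp.IsFace F) {F' : Finset (Fin n)} (hF' : Gp.IsFace F')
    {a b : Fin n} (h : succIn F a b) (h' : succIn F' a b) : F ⊆ F' := by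
  intro x hx
  by_contra hx'
  obtain ⟨u, v, huv, hxuv⟩ := exists_succIn_btw h'.1 h'.2.1 h'.2.2.1 hx'
  rcases hF'.2.1 u v huv with ⟨c, hc⟩ | hz
  · rcases Sym2.eq_iff.1 hc with ⟨rfl, rfl⟩ | ⟨rfl, rfl⟩
    · exact not_btw_add_one _ _ hxuv
    · exact hF'.not_succIn_add_one _ huv
  · have hFuv := hF.subset_interval_of_btw hz hx hxuv
    have hend : ∀ w ∈ F, w ∈ F' → w = u ∨ w = v := fun w hw hw' =>
      eq_or_eq_of_mem_interval_of_mem_interval (hFuv hw) (huv.subset_interval hw')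
    rcases hend a h.1 h'.1 with rfl | rfl <;> rcases hend b h.2.1 h'.2.1 with rfl | rfl
    · exact h.2.2.1 rfl
    · exact (not_mem_interval_iff_btw h.2.2.1.symm).2 hxuv (h.subset_interval hx)
    · exact hF'.not_succIn_and_succIn _ _ ⟨h', huv⟩
    · exact h.2.2.1 rfl

lemma eq_of_succIn (hF : Gp.IsFace F) {F' : Finset (Fin n)} (hF' : Gp.IsFace F')
    {a b : Fin n} (h : succIn F a b) (h' : succIn F' a b) : F = F' :=
  (hF.subset_of_succIn hF' h h').antisymm (hF'.subset_of_succIn hF h' h)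

lemma subset_interval_iff_of_mem {X : Finset (Fin n)} (hX : Gp.IsFace X)
    {a b c d : Fin n} (hz : s(a, b) ∈ Gp.chords) (hc : c ∈ X) (hd : d ∈ X) (hcd : c ≠ d)
    (hne : s(c, d) ≠ s(a, b)) :
    (X : Set (Fin n)) ⊆ interval a b ↔ c ∈ interval a b ∧ d ∈ interval a b := by
  refine ⟨fun h => ⟨h hc, h hd⟩, fun ⟨hca, hda⟩ => ?_⟩
  refine (hX.subset_interval_or hz).resolve_right fun hba => hne ?_
  exact Sym2.eq_of_ne_mem hcd (Sym2.mem_mk_left _ _) (Sym2.mem_mk_right _ _)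
    (Sym2.mem_iff.2 (eq_or_eq_of_mem_interval_of_mem_interval hca (hba hc)))
    (Sym2.mem_iff.2 (eq_or_eq_of_mem_interval_of_mem_interval hda (hba hd)))

lemma subset_interval_iff_not_of_boundaryEdge {X Y : Finset (Fin n)}
    (hX : Gp.IsFace X) (hY : Gp.IsFace Y) (hXY : X ≠ Y) {a b : Fin n}
    (hbX : BoundaryEdge X s(a, b)) (hbY : BoundaryEdge Y s(a, b)) :
    (X : Set (Fin n)) ⊆ interval a b ↔ ¬ (Y : Set (Fin n)) ⊆ interval a b := by
  rcases BoundaryEdge.mk_iff.1 hbX with h | h <;> rcases BoundaryEdge.mk_iff.1 hbY with h' | h'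
  · exact absurd (hX.eq_of_succIn hY h h') hXY
  · exact iff_of_false (fun hab => hX.not_subset_interval_and a b ⟨hab, h.subset_interval⟩)
      (not_not.2 h'.subset_interval)
  · exact iff_of_true h.subset_interval
      (fun hab => hY.not_subset_interval_and a b ⟨hab, h'.subset_interval⟩)
  · exact absurd (hX.eq_of_succIn hY h h') hXY

lemma subset_interval_iff_of_not_subset {X Y : Finset (Fin n)} (hX : Gp.IsFace X)
    (hY : Gp.IsFace Y) {a b : Fin n} (hz : s(a, b) ∈ Gp.chords) {T : Set (Fin n)}
    (hT : interval a b ⊆ T ∨ interval b a ⊆ T) (hXT : ¬ (X : Set (Fin n)) ⊆ T)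
    (hYT : ¬ (Y : Set (Fin n)) ⊆ T) :
    (X : Set (Fin n)) ⊆ interval a b ↔ (Y : Set (Fin n)) ⊆ interval a b := by
  rcases hT with hT | hT
  · exact iff_of_false (fun h => hXT (h.trans hT)) (fun h => hYT (h.trans hT))
  · exact iff_of_true ((hX.subset_interval_or hz).resolve_right fun h => hXT (h.trans hT))
      ((hY.subset_interval_or hz).resolve_right fun h => hYT (h.trans hT))

end IsFace

lemma subset_interval_iff_of_adj {A C : Gp.Face} (h : Gp.weakDual.Adj A C) {a b : Fin n}
    (hz : s(a, b) ∈ Gp.chords) :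
    ((A.1 : Set (Fin n)) ⊆ interval a b ↔ (C.1 : Set (Fin n)) ⊆ interval a b) ↔
      ¬ (BoundaryEdge A.1 s(a, b) ∧ BoundaryEdge C.1 s(a, b)) := by
  obtain ⟨hAC, w, hw, hA, hC⟩ := weakDual_adj.1 h
  constructor
  · rintro hiff ⟨hA', hC'⟩
    have := A.2.subset_interval_iff_not_of_boundaryEdge C.2 (fun h => hAC (Subtype.ext h))
      hA' hC'
    tauto
  · intro hnot
    obtain ⟨c, d⟩ := w
    have hne : s(c, d) ≠ s(a, b) := fun h => hnot ⟨h ▸ hA, h ▸ hC⟩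
    obtain ⟨hcA, hdA, hcd⟩ := hA.mem_mk
    obtain ⟨hcC, hdC, -⟩ := hC.mem_mk
    rw [A.2.subset_interval_iff_of_mem hz hcA hdA hcd hne,
      C.2.subset_interval_iff_of_mem hz hcC hdC hcd hne]

lemma eq_or_eq_of_boundaryEdge {A C G : Gp.Face} (hAC : A ≠ C) {a b : Fin n}
    (hA : BoundaryEdge A.1 s(a, b)) (hC : BoundaryEdge C.1 s(a, b))
    (hG : BoundaryEdge G.1 s(a, b)) : G = A ∨ G = C := by
  rcases BoundaryEdge.mk_iff.1 hA with hA | hA <;>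
    rcases BoundaryEdge.mk_iff.1 hC with hC | hC <;>
    rcases BoundaryEdge.mk_iff.1 hG with hG | hG
  all_goals first
    | exact absurd (Subtype.ext (A.2.eq_of_succIn C.2 hA hC)) hAC
    | exact .inl (Subtype.ext (G.2.eq_of_succIn A.2 hG hA))
    | exact .inr (Subtype.ext (G.2.eq_of_succIn C.2 hG hC))

lemma mem_pathChords_cons {A C B : Gp.Face} (h : Gp.weakDual.Adj A C)
    (q : Gp.weakDual.Walk C B) {z : Sym2 (Fin n)} :
    z ∈ pathChords Gp (.cons h q) ↔
      z ∈ Gp.chords ∧ BoundaryEdge A.1 z ∧ BoundaryEdge C.1 z ∨ z ∈ pathChords Gp q := by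
  simp only [pathChords, Set.mem_ofPred_eq, SimpleGraph.Walk.edges_cons, List.mem_cons]
  constructor
  · rintro ⟨hz, F, F', hFF' | hFF', hF, hF'⟩
    · rcases Sym2.eq_iff.1 hFF' with ⟨rfl, rfl⟩ | ⟨rfl, rfl⟩
      exacts [.inl ⟨hz, hF, hF'⟩, .inl ⟨hz, hF', hF⟩]
    · exact .inr ⟨hz, F, F', hFF', hF, hF'⟩
  · rintro (⟨hz, hA, hC⟩ | ⟨hz, F, F', hFF', hF, hF'⟩)
    exacts [⟨hz, A, C, .inl rfl, hA, hC⟩, ⟨hz, F, F', .inr hFF', hF, hF'⟩]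

/-- A chord bounds exactly two faces, so a trail crosses it at most once. -/
lemma mem_pathChords_iff_of_isTrail {A B : Gp.Face} {q : Gp.weakDual.Walk A B}
    (hq : q.IsTrail) {a b : Fin n} (hz : s(a, b) ∈ Gp.chords) :
    s(a, b) ∈ pathChords Gp q ↔
      ¬ ((A.1 : Set (Fin n)) ⊆ interval a b ↔ (B.1 : Set (Fin n)) ⊆ interval a b) := by
  induction q with
  | nil => simp [pathChords]
  | @cons A C B h q ih =>
    rw [SimpleGraph.Walk.isTrail_cons] at hq
    have hstep := subset_interval_iff_of_adj h hz
    have ih := ih hq.1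
    rw [mem_pathChords_cons]
    by_cases hAC : BoundaryEdge A.1 s(a, b) ∧ BoundaryEdge C.1 s(a, b)
    · have hq' : s(a, b) ∉ pathChords Gp q := by
        rintro ⟨-, F, F', hFF', hF, hF'⟩
        have : s(F, F') = s(A, C) := Sym2.eq_of_ne_mem (q.adj_of_mem_edges hFF').ne
          (Sym2.mem_mk_left _ _) (Sym2.mem_mk_right _ _)
          (Sym2.mem_iff.2 (eq_or_eq_of_boundaryEdge h.ne hAC.1 hAC.2 hF))
          (Sym2.mem_iff.2 (eq_or_eq_of_boundaryEdge h.ne hAC.1 hAC.2 hF'))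
        exact hq.2 (this ▸ hFF')
      have hCB := not_not.1 (ih.not.1 hq')
      exact iff_of_true (.inl ⟨hz, hAC⟩) fun hAB => hstep.1 (hAB.trans hCB.symm) hAC
    · rw [or_iff_right fun h => hAC h.2, ih, hstep.2 hAC]

variable {i j : Fin n}

lemma not_subset_interval_iff_of_mem_cut (hij : i ≠ j + 1) {u v : Fin n}
    (hz : s(u, v) ∈ Gp.chords) (hu : u ∈ interval i j) (hv : v ∉ interval i j)
    {X Y : Finset (Fin n)} (hX : Gp.IsFace X) (hi1 : i - 1 ∈ X) (hi : i ∈ X)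
    (hY : Gp.IsFace Y) (hj : j ∈ Y) (hj1 : j + 1 ∈ Y) :
    ¬ ((X : Set (Fin n)) ⊆ interval u v ↔ (Y : Set (Fin n)) ⊆ interval u v) := by
  obtain ⟨-, hvu, huv⟩ := Gp.chordal_of_mem_chords hz
  have hYuv : (Y : Set (Fin n)) ⊆ interval u v := by
    rcases btw_or_btw_add_one_of_mem_of_not_mem hu hv
        (not_and_or.1 fun h => hvu (h.2.trans (congrArg (· + 1) h.1).symm)) with h | h
    exacts [hY.subset_interval_of_btw hz hj h, hY.subset_interval_of_btw hz hj1 h]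
  have hXvu : (X : Set (Fin n)) ⊆ interval v u := by
    have hv' : v ∈ interval (j + 1) (i - 1) := compl_interval hij ▸ hv
    have hu' : u ∉ interval (j + 1) (i - 1) := compl_interval hij ▸ not_not.2 hu
    rw [← sub_add_cancel i 1] at hi
    rcases btw_or_btw_add_one_of_mem_of_not_mem hv' hu'
        (not_and_or.1 fun h => huv (h.2.trans (congrArg (· + 1) h.1).symm)) with h | h
    exacts [hX.subset_interval_of_btw (Sym2.eq_swap ▸ hz) hi1 h,
      hX.subset_interval_of_btw (Sym2.eq_swap ▸ hz) hi h]
  exact fun h => hX.not_subset_interval_and u v ⟨h.2 hYuv, hXvu⟩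

lemma outer_subset_cut_interval (hij : i ≠ j + 1) :
    {s(i - 1, i), s(j, j + 1)} ⊆ Gp.cut (interval i j) := by
  refine Set.insert_subset_iff.2 ⟨mk_mem_cut_iff.2 ⟨.inl ⟨i - 1, ?_⟩, ?_⟩,
    Set.singleton_subset_iff.2 (mk_mem_cut_iff.2 ⟨.inl ⟨j, rfl⟩, ?_⟩)⟩
  · rw [sub_add_cancel]
  · exact fun h => sub_one_not_mem_interval hij (h.2 (left_mem_interval i j))
  · exact fun h => add_one_not_mem_interval hij (h.1 (right_mem_interval i j))

lemma cut_interval_subset (hij : i ≠ j + 1) {F1 f F2 : Gp.Face} (hi1 : i - 1 ∈ F1.1)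
    (hi : i ∈ F1.1) (hj : j ∈ F2.1) (hj1 : j + 1 ∈ F2.1) {p1 : Gp.weakDual.Walk F1 f}
    (hp1 : p1.IsTrail) {p2 : Gp.weakDual.Walk f F2} (hp2 : p2.IsTrail) :
    Gp.cut (interval i j) ⊆
      {s(i - 1, i), s(j, j + 1)} ∪ pathChords Gp p1 ∪ pathChords Gp p2 := by
  rintro _ ⟨he | hz, u, v, rfl, hu, hv⟩
  · obtain ⟨c, hc⟩ := he
    refine .inl (.inl ?_)
    rcases Sym2.eq_iff.1 hc with ⟨rfl, rfl⟩ | ⟨rfl, rfl⟩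
    · exact .inr (congrArg (fun x => s(x, x + 1))
        (eq_of_mem_interval_of_add_one_not_mem hu hv))
    · have hv' : v ∈ interval (j + 1) (i - 1) := compl_interval hij ▸ hv
      have hu' : v + 1 ∉ interval (j + 1) (i - 1) := compl_interval hij ▸ not_not.2 hu
      exact .inl (by rw [eq_of_mem_interval_of_add_one_not_mem hv' hu', sub_add_cancel,
        Sym2.eq_swap])
  · have hsep := not_subset_interval_iff_of_mem_cut hij hz hu hv F1.2 hi1 hi F2.2 hj hj1
    by_cases hf : ((F1.1 : Set (Fin n)) ⊆ interval u v ↔ (f.1 : Set (Fin n)) ⊆ interval u v)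
    · exact .inr ((mem_pathChords_iff_of_isTrail hp2 hz).2 fun h => hsep (hf.trans h))
    · exact .inl (.inr ((mem_pathChords_iff_of_isTrail hp1 hz).2 hf))

lemma pathChords_subset_cut_interval (hij : i ≠ j + 1) {X Y : Gp.Face}
    {p : Gp.weakDual.Walk X Y} (hp : p.IsTrail)
    (hX : (∃ x ∈ X.1, x ∈ interval i j) ∧ ∃ x ∈ X.1, x ∉ interval i j)
    (hY : (∃ y ∈ Y.1, y ∈ interval i j) ∧ ∃ y ∈ Y.1, y ∉ interval i j) :
    pathChords Gp p ⊆ Gp.cut (interval i j) := by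
  obtain ⟨⟨x, hx, hxS⟩, ⟨x', hx', hx'S⟩⟩ := hX
  obtain ⟨⟨y, hy, hyS⟩, ⟨y', hy', hy'S⟩⟩ := hY
  rintro ⟨a, b⟩ hab
  refine mk_mem_cut_iff.2 ⟨.inr hab.1, fun hS => ?_⟩
  refine (mem_pathChords_iff_of_isTrail hp hab.1).1 hab ?_
  by_cases ha : a ∈ interval i j
  · exact X.2.subset_interval_iff_of_not_subset Y.2 hab.1
      (interval_subset_or_interval_subset ha (hS.1 ha)) (fun h => hx'S (h hx'))
      (fun h => hy'S (h hy'))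
  · have hb : b ∉ interval i j := fun hb => ha (hS.2 hb)
    rw [← Set.mem_compl_iff, compl_interval hij] at ha hb
    refine X.2.subset_interval_iff_of_not_subset Y.2 hab.1 (T := (interval i j)ᶜ) ?_
      (fun h => h hx hxS) (fun h => h hy hyS)
    rw [compl_interval hij]
    exact interval_subset_or_interval_subset ha hb

lemma mem_support_of_mem_interval_of_not_mem (hij : i ≠ j + 1) {F1 f F2 : Gp.Face}
    (hi1 : i - 1 ∈ F1.1) (hi : i ∈ F1.1) (hF2 : BoundaryEdge F2.1 s(j, j + 1))
    (hin : ∃ k ∈ f.1, k ∈ interval i j) (hout : ∃ k ∈ f.1, k ∉ interval i j)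
    {q : Gp.weakDual.Walk F1 F2} (hq : q.IsTrail) : f ∈ q.support := by
  obtain ⟨k, hk, hkS⟩ := hin
  obtain ⟨k', hk', hk'S⟩ := hout
  obtain ⟨u, v, huv, hu, hv⟩ := exists_succIn_mem_not_mem hk hkS hk' hk'S
  rcases f.2.2.1 u v huv with ⟨c, hc⟩ | hz
  · rcases Sym2.eq_iff.1 hc with ⟨rfl, rfl⟩ | ⟨rfl, rfl⟩
    · obtain rfl := eq_of_mem_interval_of_add_one_not_mem hu hv
      have hF2' := (BoundaryEdge.mk_iff.1 hF2).resolve_right (F2.2.not_succIn_add_one _)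
      rw [Subtype.ext (f.2.eq_of_succIn F2.2 huv hF2')]
      exact q.end_mem_support
    · exact absurd huv (f.2.not_succIn_add_one _)
  · obtain ⟨hj, hj1, -⟩ := hF2.mem_mk
    obtain ⟨-, F, F', hFF', hF, hF'⟩ := (mem_pathChords_iff_of_isTrail hq hz).2
      (not_subset_interval_iff_of_mem_cut hij hz hu hv F1.2 hi1 hi F2.2 hj hj1)
    rcases eq_or_eq_of_boundaryEdge (q.adj_of_mem_edges hFF').ne hF hF' ⟨u, v, rfl, huv⟩
      with rfl | rfl
    exacts [q.fst_mem_support_of_mem_edges hFF', q.snd_mem_support_of_mem_edges hFF']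

end OPGraph

theorem stmt_5_general (n : ℕ) [NeZero n] (Gp : OPGraph n)
    (i j : Fin n) (hij : i ≠ j + 1)
    (f F1 F2 : Gp.Face)
    (hF1 : BoundaryEdge F1.1 s(i - 1, i)) (hF2 : BoundaryEdge F2.1 s(j, j + 1))
    (hin : ∃ k ∈ f.1, k ∈ interval i j) (hout : ∃ k ∈ f.1, k ∉ interval i j)
    (p1 : Gp.weakDual.Walk F1 f) (hp1 : p1.IsPath)
    (p2 : Gp.weakDual.Walk f F2) (hp2 : p2.IsPath) :
    Gp.cut (interval i j) =
        {s(i - 1, i), s(j, j + 1)} ∪ pathChords Gp p1 ∪ pathChords Gp p2 ∧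
      ∀ q : Gp.weakDual.Walk F1 F2, q.IsPath → f ∈ q.support := by
  obtain ⟨hi1, hi, -⟩ := hF1.mem_mk
  obtain ⟨hj, hj1, -⟩ := hF2.mem_mk
  have hF1S : (∃ x ∈ F1.1, x ∈ interval i j) ∧ ∃ x ∈ F1.1, x ∉ interval i j :=
    ⟨⟨i, hi, left_mem_interval i j⟩, ⟨i - 1, hi1, sub_one_not_mem_interval hij⟩⟩
  have hF2S : (∃ x ∈ F2.1, x ∈ interval i j) ∧ ∃ x ∈ F2.1, x ∉ interval i j :=
    ⟨⟨j, hj, right_mem_interval i j⟩, ⟨j + 1, hj1, add_one_not_mem_interval hij⟩⟩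
  refine ⟨subset_antisymm ?_ ?_, fun q hq =>
    Gp.mem_support_of_mem_interval_of_not_mem hij hi1 hi hF2 hin hout hq.isTrail⟩
  · exact Gp.cut_interval_subset hij hi1 hi hj hj1 hp1.isTrail hp2.isTrail
  · exact Set.union_subset (Set.union_subset (Gp.outer_subset_cut_interval hij)
      (Gp.pathChords_subset_cut_interval hij hp1.isTrail hF1S ⟨hin, hout⟩))
      (Gp.pathChords_subset_cut_interval hij hp2.isTrail ⟨hin, hout⟩ hF2S)

/-- **Lemma.** If both `[i,j]` and its complement contain a vertex of the bounded face `f`,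
then `δ_G([i,j])` equals the union of the chords of the weak-dual paths from `f1` to `f` and
from `f` to `f2`, together with the outer edges `{i-1,i}` and `{j,j+1}`; in particular `f`
lies on the weak-dual path from `f1` to `f2`. -/
theorem stmt_5 (n : ℕ) [NeZero n] (hn : 3 ≤ n) (Gp : OPGraph n)
    (i j : Fin n) (hij : i ≠ j + 1)
    (f F1 F2 : Gp.Face)
    (hF1 : BoundaryEdge F1.1 s(i - 1, i)) (hF2 : BoundaryEdge F2.1 s(j, j + 1))
    (hin : ∃ k ∈ f.1, k ∈ interval i j) (hout : ∃ k ∈ f.1, k ∉ interval i j)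
    (p1 : Gp.weakDual.Walk F1 f) (hp1 : p1.IsPath)
    (p2 : Gp.weakDual.Walk f F2) (hp2 : p2.IsPath) :
    Gp.cut (interval i j) =
        {s(i - 1, i), s(j, j + 1)} ∪ pathChords Gp p1 ∪ pathChords Gp p2 ∧
      ∀ q : Gp.weakDual.Walk F1 F2, q.IsPath → f ∈ q.support :=
  stmt_5_general n Gp i j hij f F1 F2 hF1 hF2 hin hout p1 hp1 p2 hp2
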